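/- arXiv:2006.12546 — 2 statements merged into one kernel-verified Lean document; each statement's English description precedes it below -/
import Mathlib

section
/- Let n > 10^(10^10) be an extraordinary number with largest prime factor p, and write n = m·p with gcd(m, p) = 1. Then 2·(p² + p + 1)·log p > (log (m·p²))·(log log (m·p²)), and consequently p > (1/3)·√(log n) > 20000. -/
/-- Sum of the positive divisors of `n`. -/
def sigma1 (n : ℕ) : ℕ := ∑ d ∈ n.divisors, d

/-- `G n = σ(n) / (n · log log n)`. -/
noncomputable def G (n : ℕ) : ℝ := (sigma1 n : ℝ) / ((n : ℝ) * Real.log (Real.log n))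

/-- `n` is a GA1 number: composite and `G n ≥ G (n/p)` for every prime `p ∣ n`. -/
def GA1 (n : ℕ) : Prop :=
  1 < n ∧ ¬ n.Prime ∧ ∀ p : ℕ, p.Prime → p ∣ n → G (n / p) ≤ G n

/-- `n` is a GA2 number: `n > 1` and `G n ≥ G (c·n)` for all positive integers `c`. -/
def GA2 (n : ℕ) : Prop :=
  1 < n ∧ ∀ c : ℕ, 0 < c → G (c * n) ≤ G n

/-- `n` is extraordinary: both GA1 and GA2. -/
def Extraordinary (n : ℕ) : Prop := GA1 n ∧ GA2 n

/-! Apply GA2 with `c = p`. As `σ(p·n)/σ(n) = (p² + p + 1)/(p + 1)`, with `L = log n`,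
`q = log p` and `A = p² + p` this reads `(A + 1)·log L ≤ A·log (L + q)`. Combined with
`log (L + q) < log L + q/L` it yields `log (L + q) < (A + 1)·q/L`, which after multiplying by
`L + q ≤ 2L` is the main inequality, since `log (m·p²) = L + q`. It also yields
`L·log L < A·q`, which fails for `p ≤ √L/3` because then `A·q ≤ (L/9 + √L/3)·(log L)/2`. -/

open Real

lemma sigma1_eq_sigma_one (n : ℕ) : sigma1 n = ArithmeticFunction.sigma 1 n := by
  simp [sigma1, ArithmeticFunction.sigma_one_apply]

lemma sigma1_mul_prime_pow {m p : ℕ} (hp : p.Prime) (hcop : m.Coprime p) (k : ℕ) :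
    sigma1 (m * p ^ k) = sigma1 m * ∑ i ∈ Finset.range (k + 1), p ^ i := by
  simp only [sigma1_eq_sigma_one,
    ArithmeticFunction.isMultiplicative_sigma.map_mul_of_coprime (hcop.pow_right k),
    ArithmeticFunction.sigma_one_apply_prime_pow hp]

lemma sigma1_pos {m : ℕ} (hm : 0 < m) : 0 < sigma1 m :=
  Finset.sum_pos (fun _ hd => Nat.pos_of_mem_divisors hd) ⟨m, Nat.mem_divisors_self m hm.ne'⟩

lemma mul_log_log_le_of_G_mul_prime_le {m p : ℕ} (hp : p.Prime) (hcop : m.Coprime p)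
    (hlog : 1 < log ((m : ℝ) * p)) (hG : G (p * (m * p)) ≤ G (m * p)) :
    ((p : ℝ) ^ 2 + p + 1) * log (log ((m : ℝ) * p)) ≤
      ((p : ℝ) ^ 2 + p) * log (log ((m : ℝ) * p) + log p) := by
  have hp0 : (0 : ℝ) < p := by exact_mod_cast hp.pos
  have hm0 : 0 < m := Nat.pos_of_ne_zero (by rintro rfl; norm_num at hlog)
  have hσ : (0 : ℝ) < sigma1 m := by exact_mod_cast sigma1_pos hm0
  have hlogp : 0 ≤ log (p : ℝ) := log_nonneg (by exact_mod_cast hp.one_lt.le)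
  have hll : 0 < log (log ((m : ℝ) * p)) := log_pos hlog
  have hll' : 0 < log (log ((m : ℝ) * p) + log p) := log_pos (by linarith)
  have hpow : p * (m * p) = m * p ^ 2 := by ring
  have hlog_mul : log ((m : ℝ) * p ^ 2) = log ((m : ℝ) * p) + log p := by
    rw [sq, ← mul_assoc, log_mul (by positivity) hp0.ne']
  rw [G, G, hpow, sigma1_mul_prime_pow hp hcop, ← pow_one p, sigma1_mul_prime_pow hp hcop,
    pow_one] at hG
  simp only [Finset.sum_range_succ, Finset.sum_range_zero] at hG
  push_cast at hG
  rw [hlog_mul, div_le_div_iff₀ (by positivity) (by positivity)] at hG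
  have hcleared : ((sigma1 m : ℝ) * (m * p)) * (((p : ℝ) ^ 2 + p + 1) * log (log ((m : ℝ) * p))) ≤
      ((sigma1 m : ℝ) * (m * p)) * (((p : ℝ) ^ 2 + p) * log (log ((m : ℝ) * p) + log p)) := by
    linarith
  exact le_of_mul_le_mul_left hcleared (by positivity)

lemma log_add_lt_log_add_div {L q : ℝ} (hL : 0 < L) (hq : 0 < q) :
    log (L + q) < log L + q / L := by
  have h := log_lt_sub_one_of_pos (x := (L + q) / L) (by positivity)
    (by rw [ne_eq, div_eq_one_iff_eq hL.ne']; linarith)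
  rw [log_div (by linarith) hL.ne', add_div, div_self hL.ne'] at h
  linarith

lemma mul_log_lt_mul_of_mul_log_le {A L q : ℝ} (hA : 0 < A) (hL : 0 < L) (hq : 0 < q)
    (h : (A + 1) * log L ≤ A * log (L + q)) : L * log L < A * q := by
  have h1 := log_add_lt_log_add_div hL hq
  have h2 : log L < A * q / L := by
    rw [mul_div_assoc]; nlinarith [mul_lt_mul_of_pos_left h1 hA]
  rwa [lt_div_iff₀ hL, mul_comm] at h2

lemma add_mul_log_add_lt_of_mul_log_le {A L q : ℝ} (hA : 0 ≤ A) (hL : 0 < L) (hq : 0 < q)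
    (hqL : q ≤ L) (h : (A + 1) * log L ≤ A * log (L + q)) :
    (L + q) * log (L + q) < 2 * (A + 1) * q := by
  have h1 := log_add_lt_log_add_div hL hq
  have h2 : log (L + q) < (A + 1) * q / L := by
    rw [mul_div_assoc]; nlinarith [mul_lt_mul_of_pos_left h1 (by linarith : (0 : ℝ) < A + 1)]
  calc (L + q) * log (L + q) < (L + q) * ((A + 1) * q / L) :=
        mul_lt_mul_of_pos_left h2 (by linarith)
    _ ≤ (2 * L) * ((A + 1) * q / L) := by gcongr; linarith
    _ = 2 * (A + 1) * q := by field_simp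

lemma one_div_three_mul_sqrt_lt {L x : ℝ} (hL : 1 < L) (hx : 0 < x)
    (h : L * log L < (x ^ 2 + x) * log x) : 1 / 3 * √L < x := by
  by_contra! hxs
  set s := √L
  have hs2 : s ^ 2 = L := sq_sqrt (by linarith)
  have hs1 : 1 < s := by rw [← sqrt_one]; exact sqrt_lt_sqrt zero_le_one hL
  have hl : 0 < log L := log_pos hL
  have hlogx : log x ≤ log L / 2 := by
    rw [← log_sqrt (by linarith)]; exact log_le_log hx (by linarith)
  have hA : x ^ 2 + x ≤ s ^ 2 / 9 + s / 3 := by nlinarith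
  have : s ^ 2 * log L < (s ^ 2 / 9 + s / 3) * (log L / 2) :=
    calc s ^ 2 * log L = L * log L := by rw [hs2]
      _ < (x ^ 2 + x) * log x := h
      _ ≤ (x ^ 2 + x) * (log L / 2) := mul_le_mul_of_nonneg_left hlogx (by positivity)
      _ ≤ (s ^ 2 / 9 + s / 3) * (log L / 2) := mul_le_mul_of_nonneg_right hA (by positivity)
  nlinarith [mul_lt_mul_of_pos_right hs1 hl]

lemma ten_pow_ten_lt_log {n : ℕ} (hn : 10 ^ (10 ^ 10) < n) : (10 : ℝ) ^ 10 < log n := by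
  have hn' : (10 : ℝ) ^ (10 ^ 10 : ℕ) < n := by exact_mod_cast hn
  have h10 : 1 < log (10 : ℝ) := by
    rw [lt_log_iff_exp_lt (by norm_num)]
    linarith [exp_one_lt_d9]
  have := log_lt_log (by positivity) hn'
  rw [log_pow] at this
  push_cast at this
  nlinarith

theorem extraordinary_large_prime_factor_general (n m p : ℕ) (hn : 10 ^ (10 ^ 10) < n)
    (hext : Extraordinary n) (hp : p.Prime)
    (hnm : n = m * p) (hcop : Nat.gcd m p = 1) :
    Real.log ((m : ℝ) * (p : ℝ) ^ 2) * Real.log (Real.log ((m : ℝ) * (p : ℝ) ^ 2)) <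
      2 * ((p : ℝ) ^ 2 + (p : ℝ) + 1) * Real.log p ∧
    (1 / 3) * Real.sqrt (Real.log n) < (p : ℝ) ∧
    20000 < (1 / 3) * Real.sqrt (Real.log n) := by
  obtain ⟨-, -, hGA2⟩ := hext
  have hL := ten_pow_ten_lt_log hn
  subst hnm
  push_cast at hL ⊢
  have hp0 : (0 : ℝ) < p := by exact_mod_cast hp.pos
  have hm : 0 < m := Nat.pos_of_ne_zero (by rintro rfl; norm_num at hL)
  have hq : 0 < log (p : ℝ) := log_pos (by exact_mod_cast hp.one_lt)
  have hqL : log (p : ℝ) ≤ log ((m : ℝ) * p) :=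
    log_le_log hp0 (le_mul_of_one_le_left hp0.le (by exact_mod_cast hm))
  have hGA2_p := mul_log_log_le_of_G_mul_prime_le hp hcop (by linarith) (hGA2 p hp.pos)
  refine ⟨?_, ?_, ?_⟩
  · rw [show (m : ℝ) * p ^ 2 = m * p * p by ring, log_mul (by positivity) hp0.ne']
    exact add_mul_log_add_lt_of_mul_log_le (by positivity) (by linarith) hq hqL hGA2_p
  · exact one_div_three_mul_sqrt_lt (by linarith) hp0
      (mul_log_lt_mul_of_mul_log_le (by positivity) (by linarith) hq hGA2_p)
  · have : (60000 : ℝ) < √(log ((m : ℝ) * p)) := lt_sqrt_of_sq_lt (by linarith)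
    linarith

/-- If `n > 10^(10^10)` is extraordinary with largest prime factor `p` and `n = m·p`
with `gcd(m,p) = 1`, then `2(p² + p + 1)·log p > (log(m·p²))·(log log(m·p²))` and
consequently `p > (1/3)·√(log n) > 20000`. -/
theorem extraordinary_large_prime_factor (n m p : ℕ) (hn : 10 ^ (10 ^ 10) < n)
    (hext : Extraordinary n) (hp : p.Prime) (hpn : p ∣ n)
    (hmax : ∀ q : ℕ, q.Prime → q ∣ n → q ≤ p)
    (hnm : n = m * p) (hcop : Nat.gcd m p = 1) :
    Real.log ((m : ℝ) * (p : ℝ) ^ 2) * Real.log (Real.log ((m : ℝ) * (p : ℝ) ^ 2)) <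
      2 * ((p : ℝ) ^ 2 + (p : ℝ) + 1) * Real.log p ∧
    (1 / 3) * Real.sqrt (Real.log n) < (p : ℝ) ∧
    20000 < (1 / 3) * Real.sqrt (Real.log n) :=
  extraordinary_large_prime_factor_general n m p hn hext hp hnm hcop
end

section
/- Every colossally abundant number is superabundant. -/
/-- `s` is superabundant: `σ(s)/s > σ(t)/t` for every positive integer `t < s`. -/
def Superabundant (s : ℕ) : Prop :=
  0 < s ∧ ∀ t : ℕ, 0 < t → t < s → (sigma1 t : ℝ) / (t : ℝ) < (sigma1 s : ℝ) / (s : ℝ)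

/-- `U` is colossally abundant: for some `ε > 0`,
`σ(U)/U^(1+ε) ≥ σ(V)/V^(1+ε)` for every positive integer `V`. -/
def ColossallyAbundant (U : ℕ) : Prop :=
  0 < U ∧ ∃ ε : ℝ, 0 < ε ∧
    ∀ V : ℕ, 0 < V → (sigma1 V : ℝ) / (V : ℝ) ^ (1 + ε) ≤ (sigma1 U : ℝ) / (U : ℝ) ^ (1 + ε)

lemma sigma1_pos_s18 {n : ℕ} (hn : 0 < n) : 0 < sigma1 n := by
  unfold sigma1
  apply Finset.sum_pos
  · intro d hd
    exact Nat.pos_of_mem_divisors hd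
  · exact ⟨n, Nat.mem_divisors_self n hn.ne'⟩

/-- Every colossally abundant number is superabundant. -/
theorem superabundant_of_colossallyAbundant (U : ℕ) (h : ColossallyAbundant U) :
    Superabundant U := by
  obtain ⟨hU, ε, hε, hCA⟩ := h
  refine ⟨hU, fun t ht htU => ?_⟩
  have htR : (0 : ℝ) < (t : ℝ) := by exact_mod_cast ht
  have hUR : (0 : ℝ) < (U : ℝ) := by exact_mod_cast hU
  have key := hCA t ht
  have hσU : (0 : ℝ) < (sigma1 U : ℝ) := by exact_mod_cast sigma1_pos_s18 hU
  have hrt : (t : ℝ) ^ (1 + ε) = (t : ℝ) * (t : ℝ) ^ ε := by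
    rw [Real.rpow_add htR, Real.rpow_one]
  have hrU : (U : ℝ) ^ (1 + ε) = (U : ℝ) * (U : ℝ) ^ ε := by
    rw [Real.rpow_add hUR, Real.rpow_one]
  have htpow : (0 : ℝ) < (t : ℝ) ^ ε := Real.rpow_pos_of_pos htR ε
  have hUpow : (0 : ℝ) < (U : ℝ) ^ ε := Real.rpow_pos_of_pos hUR ε
  have hlt : (t : ℝ) ^ ε < (U : ℝ) ^ ε :=
    Real.rpow_lt_rpow htR.le (by exact_mod_cast htU) hε
  calc (sigma1 t : ℝ) / (t : ℝ)
      = ((sigma1 t : ℝ) / (t : ℝ) ^ (1 + ε)) * (t : ℝ) ^ ε := by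
        rw [hrt]; field_simp
    _ ≤ ((sigma1 U : ℝ) / (U : ℝ) ^ (1 + ε)) * (t : ℝ) ^ ε :=
        mul_le_mul_of_nonneg_right key htpow.le
    _ < ((sigma1 U : ℝ) / (U : ℝ) ^ (1 + ε)) * (U : ℝ) ^ ε := by
        apply mul_lt_mul_of_pos_left hlt
        exact div_pos hσU (Real.rpow_pos_of_pos hUR _)
    _ = (sigma1 U : ℝ) / (U : ℝ) := by
        rw [hrU]; field_simp
end
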